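/- Let (x*, y*) be a KKT point of (SPOcp). Then there exists α* > 0 such that for every α ≥ α*, the pair (x*, y*) is a KKT point of (Pen(α)). -/
import Mathlib


open Filter Topology

noncomputable section

/-- Euclidean n-space. -/
abbrev E (n : ℕ) : Type := EuclideanSpace ℝ (Fin n)

/-- KKT point of the complementarity reformulation (SPOcp). -/
def KKTcp {n m q : ℕ} (f : E n → ℝ) (g : Fin m → E n → ℝ) (h : Fin q → E n → ℝ)
    (p : Fin n → ℝ → ℝ) (x y : E n) : Prop :=
  (∀ i, g i x ≤ 0) ∧ (∀ j, h j x = 0) ∧ (∀ i, 0 ≤ x i) ∧ (∀ i, 0 ≤ y i) ∧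
  (∀ i, x i * y i = 0) ∧
  ∃ (lam : Fin m → ℝ) (mu : Fin q → ℝ) (νx νy γ : Fin n → ℝ),
    (∀ i, 0 ≤ lam i) ∧ (∀ i, lam i * g i x = 0) ∧
    (∀ i, 0 ≤ νx i) ∧ (∀ i, νx i * x i = 0) ∧
    (∀ i, 0 ≤ νy i) ∧ (∀ i, νy i * y i = 0) ∧
    (∀ k, gradient f x k + (∑ i, lam i * gradient (g i) x k) +
        (∑ j, mu j * gradient (h j) x k) - νx k + γ k * y k = 0) ∧
    (∀ i, deriv (p i) (y i) - νy i + γ i * x i = 0)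

/-- KKT point of the penalized problem (Pen(α)). -/
def KKTpen {n m q : ℕ} (f : E n → ℝ) (g : Fin m → E n → ℝ) (h : Fin q → E n → ℝ)
    (p : Fin n → ℝ → ℝ) (α : ℝ) (x y : E n) : Prop :=
  (∀ i, g i x ≤ 0) ∧ (∀ j, h j x = 0) ∧ (∀ i, 0 ≤ x i) ∧ (∀ i, 0 ≤ y i) ∧
  ∃ (lam : Fin m → ℝ) (mu : Fin q → ℝ) (νx νy : Fin n → ℝ),
    (∀ i, 0 ≤ lam i) ∧ (∀ i, lam i * g i x = 0) ∧
    (∀ i, 0 ≤ νx i) ∧ (∀ i, νx i * x i = 0) ∧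
    (∀ i, 0 ≤ νy i) ∧ (∀ i, νy i * y i = 0) ∧
    (∀ k, gradient f x k + (∑ i, lam i * gradient (g i) x k) +
        (∑ j, mu j * gradient (h j) x k) + α * y k - νx k = 0) ∧
    (∀ i, deriv (p i) (y i) + α * x i - νy i = 0)

/-- every KKT point of (SPOcp) is a KKT point of (Pen(α)) for
all sufficiently large α. -/
theorem stmt_14 {n m q : ℕ} (hn : 1 ≤ n) {ρ : ℝ} (hρ : 0 < ρ)
    (f : E n → ℝ) (g : Fin m → E n → ℝ) (h : Fin q → E n → ℝ)
    (hf : ContDiff ℝ 1 f) (hg : ∀ i, ContDiff ℝ 1 (g i)) (hh : ∀ j, ContDiff ℝ 1 (h j))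
    (p : Fin n → ℝ → ℝ) (s : Fin n → ℝ)
    (hp : ∀ i, ContDiff ℝ 1 (p i))
    (hconv : ∀ i, ConvexOn ℝ Set.univ (p i))
    (hspos : ∀ i, 0 < s i)
    (hmin : ∀ i t, p i (s i) ≤ p i t)
    (hstrict : ∀ i t, t ≠ s i → p i (s i) < p i t)
    (hscale : ∀ i, p i 0 - p i (s i) = ρ)
    (xstar ystar : E n)
    (hKKT : KKTcp f g h p xstar ystar) :
    ∃ αstar > (0 : ℝ), ∀ α ≥ αstar, KKTpen f g h p α xstar ystar := by

  obtain ⟨hg0, hh0, hx0, hy0, hxy, lam, mu, νx, νy, γ, hlam0, hlamg, hνx0, hνxx, hνy0, hνyy, hgrad, hderiv⟩ := hKKT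
  refine ⟨1 + ∑ i, |γ i|, by positivity, fun α hα => ?_⟩
  have hγle : ∀ i, γ i ≤ α := by
    intro i
    have h1 : |γ i| ≤ ∑ j, |γ j| :=
      Finset.single_le_sum (f := fun j => |γ j|) (fun j _ => abs_nonneg _) (Finset.mem_univ i)
    have := le_abs_self (γ i)
    linarith
  refine ⟨hg0, hh0, hx0, hy0, lam, mu,
    (fun k => νx k + (α - γ k) * ystar k),
    (fun i => νy i + (α - γ i) * xstar i),
    hlam0, hlamg, ?_, ?_, ?_, ?_, ?_, ?_⟩
  · intro i
    dsimp only
    have := hνx0 i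
    have := hy0 i
    have := hγle i
    nlinarith
  · intro i
    dsimp only
    have h1 := hνxx i
    have h2 := hxy i
    linear_combination h1 + (α - γ i) * h2
  · intro i
    dsimp only
    have := hνy0 i
    have := hx0 i
    have := hγle i
    nlinarith
  · intro i
    dsimp only
    have h1 := hνyy i
    have h2 := hxy i
    linear_combination h1 + (α - γ i) * h2
  · intro k
    dsimp only
    have := hgrad k
    ring_nf
    ring_nf at this
    linarith
  · intro i
    dsimp only
    have := hderiv i
    ring_nf
    ring_nf at this
    linarith
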